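/- Let V be an N_K=N SUSY vertex algebra and M a V-module, with Li filtrations E_n := E_n(V) and E_n(M). For every u ∈ E_r, m ∈ E_s(M), l ∈ ℤ and L ⊂ [N] one has u_{(l|L)} m ∈ E_{r+s−l−1}(M); and if moreover l ≥ 0, then u_{(l|L)} m ∈ E_{r+s−l}(M). -/

import Mathlib

open Finset
open scoped DirectSum

namespace SUSY

/-- The sign `(-1)^x` attached to a parity `x : ZMod 2`. -/
def sg (x : ZMod 2) : ℤ := if x = 0 then 1 else -1

/-- The reordering sign `σ(I,J)` (equal to `0` when `I` and `J` are not disjoint). -/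
def ssgn {N : ℕ} (I J : Finset (Fin N)) : ℤ :=
  if Disjoint I J then (-1) ^ (((I ×ˢ J).filter fun p => p.2 < p.1).card) else 0

/-- The generalized binomial coefficient `x(x-1)⋯(x-j+1)/j!` in a field `𝕜`. -/
noncomputable def dchoose (𝕜 : Type) [Field 𝕜] (x : ℤ) (j : ℕ) : 𝕜 :=
  (∏ i ∈ Finset.range j, ((x : 𝕜) - (i : 𝕜))) / (j.factorial : 𝕜)

/-- Ordered product `S^{l₁} ∘ ⋯ ∘ S^{l_r}` over an ordered subset `L = {l₁ < ⋯ < l_r}`. -/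
def sProd {𝕜 : Type} [Field 𝕜] {V : Type} [AddCommGroup V] [Module 𝕜 V] {N : ℕ}
    (S : Fin N → Module.End 𝕜 V) (L : Finset (Fin N)) : Module.End 𝕜 V :=
  ((L.sort (· ≤ ·)).map S).prod

section Gr

variable {𝕜 : Type} [Field 𝕜] {V : Type} [AddCommGroup V] [Module 𝕜 V]

/-- For a filtration `E`, the quotient `E n / E (n+1)`. -/
abbrev grQuot (E : ℤ → Submodule 𝕜 V) (n : ℕ) : Type :=
  ↥(E (n : ℤ)) ⧸ Submodule.comap (E (n : ℤ)).subtype (E ((n : ℤ) + 1))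

/-- The associated graded space `⨁ₙ E n / E (n+1)` of a filtration `E`. -/
abbrev GrLi (E : ℤ → Submodule 𝕜 V) : Type := ⨁ n : ℕ, grQuot E n

/-- The class of an element `a ∈ E n` in the degree `n` component `E n / E (n+1)`
of the associated graded space. -/
noncomputable def grCls (E : ℤ → Submodule 𝕜 V) (n : ℕ) (a : V) (h : a ∈ E (n : ℤ)) :
    GrLi E :=
  DirectSum.of (fun m : ℕ => grQuot E m) n (Submodule.Quotient.mk ⟨a, h⟩)

end Gr

/-- A supercommutative superalgebra structure on a (possibly noncommutative) ring `A`. -/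
structure SuperRing (𝕜 : Type) [CommRing 𝕜] (A : Type) [Ring A] [Algebra 𝕜 A] : Type where
  gr : ZMod 2 → Submodule 𝕜 A
  decomp : DirectSum.Decomposition gr
  one_mem : (1 : A) ∈ gr 0
  mul_mem : ∀ (p q : ZMod 2) (x y : A), x ∈ gr p → y ∈ gr q → x * y ∈ gr (p + q)
  scomm : ∀ (p q : ZMod 2) (x y : A), x ∈ gr p → y ∈ gr q → x * y = sg (p * q) • (y * x)

/-- An even derivation of a superalgebra. -/
structure EvenDer (𝕜 : Type) [CommRing 𝕜] (A : Type) [Ring A] [Algebra 𝕜 A]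
    (SA : SuperRing 𝕜 A) : Type where
  D : A →ₗ[𝕜] A
  even : ∀ (p : ZMod 2), ∀ x ∈ SA.gr p, D x ∈ SA.gr p
  leibniz : ∀ x y : A, D (x * y) = D x * y + x * D y

/-- An odd derivation of a superalgebra. -/
structure OddDer (𝕜 : Type) [CommRing 𝕜] (A : Type) [Ring A] [Algebra 𝕜 A]
    (SA : SuperRing 𝕜 A) : Type where
  D : A →ₗ[𝕜] A
  odd : ∀ (p : ZMod 2), ∀ x ∈ SA.gr p, D x ∈ SA.gr (p + 1)
  leibniz : ∀ (p : ZMod 2) (x y : A), x ∈ SA.gr p →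
    D (x * y) = D x * y + sg p • (x * D y)

/-- The structure of a Poisson superalgebra of parity `qpar` on a `𝕜`-module `Q`:
a unital supercommutative multiplication together with a Poisson bracket of parity
`qpar` satisfying super skew-symmetry, the (parity-shifted) Jacobi identity and
the Leibniz rule. -/
structure PoissonSuperAlgStruct (𝕜 : Type) [Field 𝕜] (Q : Type) [AddCommGroup Q]
    [Module 𝕜 Q] (qpar : ZMod 2) : Type where
  gr : ZMod 2 → Submodule 𝕜 Q
  decomp : DirectSum.Decomposition gr
  mul : Q →ₗ[𝕜] Q →ₗ[𝕜] Q
  one : Q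
  br : Q →ₗ[𝕜] Q →ₗ[𝕜] Q
  one_even : one ∈ gr 0
  mul_mem : ∀ (p q : ZMod 2) (x y : Q), x ∈ gr p → y ∈ gr q → mul x y ∈ gr (p + q)
  br_mem : ∀ (p q : ZMod 2) (x y : Q), x ∈ gr p → y ∈ gr q → br x y ∈ gr (p + q + qpar)
  mul_assoc' : ∀ x y z : Q, mul (mul x y) z = mul x (mul y z)
  mul_scomm : ∀ (p q : ZMod 2) (x y : Q), x ∈ gr p → y ∈ gr q →
    mul x y = sg (p * q) • mul y x
  one_mul' : ∀ x : Q, mul one x = x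
  br_skew : ∀ (p q : ZMod 2) (x y : Q), x ∈ gr p → y ∈ gr q →
    br x y = (-sg (p * q + qpar)) • br y x
  br_jacobi : ∀ (p q r : ZMod 2) (x y z : Q), x ∈ gr p → y ∈ gr q → z ∈ gr r →
    br x (br y z)
      = (-sg (p * qpar + qpar)) • br (br x y) z
        + sg ((p + qpar) * (q + qpar)) • br y (br x z)
  leibniz : ∀ (p q : ZMod 2) (x y z : Q), x ∈ gr p → y ∈ gr q →
    br x (mul y z) = mul (br x y) z + sg ((p + qpar) * q) • mul y (br x z)
section Structures
variable (𝕜 : Type) [Field 𝕜] [CharZero 𝕜] (N : ℕ)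
variable (V : Type) [AddCommGroup V] [Module 𝕜 V]

/-- An `N_W = N` SUSY vertex algebra, described through the Fourier modes
`a_(j|J)` of the state-superfield correspondence
`Y(a,Z) = ∑ Z^(-1-j | [N]∖J) a_(j|J)`. -/
structure NWSusyVA : Type where
  gr : ZMod 2 → Submodule 𝕜 V
  decomp : DirectSum.Decomposition gr
  vac : V
  T : Module.End 𝕜 V
  S : Fin N → Module.End 𝕜 V
  mode : V →ₗ[𝕜] ℤ → Finset (Fin N) → Module.End 𝕜 V
  mode_trunc : ∀ (a v : V), ∃ n : ℕ, ∀ j : ℤ, (n : ℤ) ≤ j → ∀ J, mode a j J v = 0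
  vac_even : vac ∈ gr 0
  T_even : ∀ (p : ZMod 2), ∀ x ∈ gr p, T x ∈ gr p
  S_odd : ∀ (i : Fin N) (p : ZMod 2), ∀ x ∈ gr p, S i x ∈ gr (p + 1)
  mode_parity : ∀ (pa pv : ZMod 2) (a v : V) (j : ℤ) (J : Finset (Fin N)),
    a ∈ gr pa → v ∈ gr pv →
    mode a j J v ∈ gr (pa + pv + (N : ZMod 2) + (J.card : ZMod 2))
  mode_vac : ∀ a : V, mode a (-1) Finset.univ vac = a
  mode_vac_nonneg : ∀ (a : V) (j : ℤ), 0 ≤ j → ∀ J, mode a j J vac = 0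
  T_vac : T vac = 0
  S_vac : ∀ i, S i vac = 0
  T_transl : ∀ (a : V) (j : ℤ) (J : Finset (Fin N)),
    T * mode a j J - mode a j J * T = (-j) • mode a (j - 1) J
  S_transl : ∀ (i : Fin N) (pa : ZMod 2) (a : V), a ∈ gr pa →
    ∀ (j : ℤ) (J : Finset (Fin N)),
    S i * mode a j J
        - sg (pa + (N : ZMod 2) + (J.card : ZMod 2)) • (mode a j J * S i)
      = ssgn (Finset.univ \ J) {i} • mode a j (J.erase i)
  locality : ∀ (pa pb : ZMod 2) (a b : V), a ∈ gr pa → b ∈ gr pb →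
    ∃ n : ℕ, ∀ (p q : ℤ) (J K : Finset (Fin N)),
      (∑ i ∈ Finset.range (n + 1),
        ((-1 : ℤ) ^ i * (n.choose i : ℤ)) •
          (mode a (p + ((n - i : ℕ) : ℤ)) J * mode b (q + (i : ℤ)) K
            - sg ((pa + (N : ZMod 2) + (J.card : ZMod 2)) *
                  (pb + (N : ZMod 2) + (K.card : ZMod 2))) •
              (mode b (q + (i : ℤ)) K * mode a (p + ((n - i : ℕ) : ℤ)) J))) = 0

/-- An `N_K = N` SUSY vertex algebra, described through the Fourier modes
`a_(j|J)` of the state-superfield correspondence. -/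
structure NKSusyVA : Type where
  gr : ZMod 2 → Submodule 𝕜 V
  decomp : DirectSum.Decomposition gr
  vac : V
  SK : Fin N → Module.End 𝕜 V
  mode : V →ₗ[𝕜] ℤ → Finset (Fin N) → Module.End 𝕜 V
  mode_trunc : ∀ (a v : V), ∃ n : ℕ, ∀ j : ℤ, (n : ℤ) ≤ j → ∀ J, mode a j J v = 0
  vac_even : vac ∈ gr 0
  SK_odd : ∀ (i : Fin N) (p : ZMod 2), ∀ x ∈ gr p, SK i x ∈ gr (p + 1)
  mode_parity : ∀ (pa pv : ZMod 2) (a v : V) (j : ℤ) (J : Finset (Fin N)),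
    a ∈ gr pa → v ∈ gr pv →
    mode a j J v ∈ gr (pa + pv + (N : ZMod 2) + (J.card : ZMod 2))
  mode_vac : ∀ a : V, mode a (-1) Finset.univ vac = a
  mode_vac_nonneg : ∀ (a : V) (j : ℤ), 0 ≤ j → ∀ J, mode a j J vac = 0
  SK_vac : ∀ i, SK i vac = 0
  SK_transl : ∀ (i : Fin N) (pa : ZMod 2) (a : V), a ∈ gr pa →
    ∀ (j : ℤ) (J : Finset (Fin N)),
    SK i * mode a j J
        - sg (pa + (N : ZMod 2) + (J.card : ZMod 2)) • (mode a j J * SK i)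
      = if i ∈ J then ssgn (Finset.univ \ J) {i} • mode a j (J.erase i)
        else (-j * ssgn (Finset.univ \ insert i J) {i}) • mode a (j - 1) (insert i J)
  locality : ∀ (pa pb : ZMod 2) (a b : V), a ∈ gr pa → b ∈ gr pb →
    ∃ n : ℕ, ∀ (p q : ℤ) (J K : Finset (Fin N)),
      (∑ i ∈ Finset.range (n + 1),
        ((-1 : ℤ) ^ i * (n.choose i : ℤ)) •
          (mode a (p + ((n - i : ℕ) : ℤ)) J * mode b (q + (i : ℤ)) K
            - sg ((pa + (N : ZMod 2) + (J.card : ZMod 2)) *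
                  (pb + (N : ZMod 2) + (K.card : ZMod 2))) •
              (mode b (q + (i : ℤ)) K * mode a (p + ((n - i : ℕ) : ℤ)) J))) = 0

variable (M : Type) [AddCommGroup M] [Module 𝕜 M]

/-- A module over an `N_W = N` SUSY vertex algebra, given by the Fourier modes of
the superfields `Y^M(a,Z)`, satisfying the standard module axioms (vacuum acting as
the identity, translation invariance, and the Borcherds-type identities, i.e. the
SUSY commutator formula and the SUSY iterate formula hold for the action on `M`). -/
structure NWModule (W : NWSusyVA 𝕜 N V) : Type where
  grM : ZMod 2 → Submodule 𝕜 M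
  decompM : DirectSum.Decomposition grM
  amode : V →ₗ[𝕜] ℤ → Finset (Fin N) → Module.End 𝕜 M
  amode_trunc : ∀ (a : V) (m : M), ∃ n : ℕ, ∀ j : ℤ, (n : ℤ) ≤ j → ∀ J, amode a j J m = 0
  amode_parity : ∀ (pa pm : ZMod 2) (a : V) (m : M) (j : ℤ) (J : Finset (Fin N)),
    a ∈ W.gr pa → m ∈ grM pm →
    amode a j J m ∈ grM (pa + pm + (N : ZMod 2) + (J.card : ZMod 2))
  vac_act : ∀ (j : ℤ) (J : Finset (Fin N)),
    amode W.vac j J = if j = -1 ∧ J = Finset.univ then 1 else 0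
  T_act : ∀ (a : V) (j : ℤ) (J : Finset (Fin N)),
    amode (W.T a) j J = (-j) • amode a (j - 1) J
  S_act : ∀ (i : Fin N) (a : V) (j : ℤ) (J : Finset (Fin N)),
    amode (W.S i a) j J = ssgn {i} (Finset.univ \ J) • amode a j (J.erase i)
  comm_formula : ∀ (pa pb : ZMod 2) (a b : V), a ∈ W.gr pa → b ∈ W.gr pb →
    ∀ (l m : ℤ) (L M' : Finset (Fin N)) (u : M),
    amode a l L (amode b m M' u)
        - sg ((pa + (N : ZMod 2) + (L.card : ZMod 2)) *
              (pb + (N : ZMod 2) + (M'.card : ZMod 2))) •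
            amode b m M' (amode a l L u)
      = ∑ᶠ j : ℕ, ∑ J : Finset (Fin N),
          if L ∩ M' ⊆ J then
            (((sg ((pa + (N : ZMod 2) + (L.card : ZMod 2)) *
                     ((N : ZMod 2) + (M'.card : ZMod 2))
                   + ((L.card : ZMod 2) + (J.card : ZMod 2)) *
                     ((N : ZMod 2) + (J.card : ZMod 2)))
                * (ssgn J (Finset.univ \ J) * ssgn L (Finset.univ \ L) * ssgn J (L \ J)
                    * ssgn (L \ J) ((Finset.univ \ M') \ (L \ J))) : ℤ) : 𝕜)
              * dchoose 𝕜 l j) •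
            amode (W.mode a (j : ℤ) J b) (l + m - (j : ℤ)) (M' ∪ (L \ J)) u
          else 0
  iterate_formula : ∀ (pa pb : ZMod 2) (a b : V), a ∈ W.gr pa → b ∈ W.gr pb →
    ∀ (k l : ℤ) (K L : Finset (Fin N)) (u : M),
    amode (W.mode a k K b) l L u
      = ∑ᶠ j : ℕ, ∑ J ∈ K.powerset,
          (((sg ((j : ZMod 2)
                 + ((K \ J).card : ZMod 2) * (1 + ((Finset.univ \ J).card : ZMod 2)))
              * (ssgn J (K \ J) * ssgn J (Finset.univ \ J) * ssgn L (K \ J)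
                  * ssgn (L ∪ (K \ J)) (Finset.univ \ (L ∪ (K \ J)))) : ℤ) : 𝕜)
            * dchoose 𝕜 k j) •
          (sg ((pa + (N : ZMod 2) + (J.card : ZMod 2)) *
                ((Finset.univ \ (L ∪ (K \ J))).card : ZMod 2)) •
              amode a (k - (j : ℤ)) J (amode b (l + (j : ℤ)) (L ∪ (K \ J)) u)
            - sg ((k : ZMod 2) + pa * pb
                  + (pb + (N : ZMod 2) + (J.card : ZMod 2)) *
                    ((Finset.univ \ (L ∪ (K \ J))).card : ZMod 2)) •
              amode b (k + l - (j : ℤ)) (L ∪ (K \ J)) (amode a (j : ℤ) J u))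

/-- A module over an `N_K = N` SUSY vertex algebra. -/
structure NKModule (W : NKSusyVA 𝕜 N V) : Type where
  grM : ZMod 2 → Submodule 𝕜 M
  decompM : DirectSum.Decomposition grM
  amode : V →ₗ[𝕜] ℤ → Finset (Fin N) → Module.End 𝕜 M
  amode_trunc : ∀ (a : V) (m : M), ∃ n : ℕ, ∀ j : ℤ, (n : ℤ) ≤ j → ∀ J, amode a j J m = 0
  amode_parity : ∀ (pa pm : ZMod 2) (a : V) (m : M) (j : ℤ) (J : Finset (Fin N)),
    a ∈ W.gr pa → m ∈ grM pm →
    amode a j J m ∈ grM (pa + pm + (N : ZMod 2) + (J.card : ZMod 2))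
  vac_act : ∀ (j : ℤ) (J : Finset (Fin N)),
    amode W.vac j J = if j = -1 ∧ J = Finset.univ then 1 else 0
  SK_act : ∀ (i : Fin N) (a : V) (j : ℤ) (J : Finset (Fin N)),
    amode (W.SK i a) j J
      = if i ∈ J then ssgn (Finset.univ \ J) {i} • amode a j (J.erase i)
        else (-j * ssgn (Finset.univ \ insert i J) {i}) • amode a (j - 1) (insert i J)
  comm_formula : ∀ (pa pb : ZMod 2) (a b : V), a ∈ W.gr pa → b ∈ W.gr pb →
    ∀ (l m : ℤ) (L M' : Finset (Fin N)) (u : M),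
    amode a l L (amode b m M' u)
        - sg ((pa + (N : ZMod 2) + (L.card : ZMod 2)) *
              (pb + (N : ZMod 2) + (M'.card : ZMod 2))) •
            amode b m M' (amode a l L u)
      = ∑ᶠ j : ℕ, ∑ J : Finset (Fin N),
          if M' ∩ ((J \ L) ∪ (L \ J)) = ∅ then
            (((sg ((pa + (N : ZMod 2) + (L.card : ZMod 2)) *
                     ((N : ZMod 2) + (M'.card : ZMod 2))
                   + (J.card : ZMod 2) * ((N : ZMod 2) + (L.card : ZMod 2))
                   + (L.card : ZMod 2) * (N : ZMod 2)
                   + (((J ∩ L).card.choose 2 : ℕ) : ZMod 2)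
                   + (((J.card + 1).choose 2 : ℕ) : ZMod 2))
                * (ssgn ((J \ L) ∪ (L \ J))
                      (Finset.univ \ (M' ∪ (J \ L) ∪ (L \ J)))
                    * ssgn J (Finset.univ \ J) * ssgn L (Finset.univ \ L)
                    * ssgn (J \ L) (J ∩ L) * ssgn (J ∩ L) (L \ J)
                    * ssgn (J \ L) (L \ J)) : ℤ) : 𝕜)
              * ((∏ i ∈ Finset.range (j + (J \ L).card), ((l : 𝕜) - (i : 𝕜)))
                  / (j.factorial : 𝕜))) •
            amode (W.mode a (j : ℤ) J b)
              (l + m - (j : ℤ) - ((J \ L).card : ℤ)) (M' ∪ (J \ L) ∪ (L \ J)) u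
          else 0
  iterate_formula : ∀ (pa pb : ZMod 2) (a b : V), a ∈ W.gr pa → b ∈ W.gr pb →
    ∀ (k l : ℤ) (K L : Finset (Fin N)) (w : M),
    amode (W.mode a k K b) l L w
      = ∑ᶠ j : ℕ, ∑ J : Finset (Fin N), ∑ M' ∈ (J ∩ K).powerset,
          (((sg ((j : ZMod 2)
                 + ((((J \ M').card + 1).choose 2 : ℕ) : ZMod 2)
                 + ((J \ M').card : ZMod 2) *
                     ((M'.card : ZMod 2) + ((Finset.univ \ J).card : ZMod 2))
                 + ((K \ M').card : ZMod 2) * (1 + ((Finset.univ \ J).card : ZMod 2))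
                 + ((Finset.univ \ J).card : ZMod 2) *
                     ((Finset.univ \ (L ∪ (J \ M') ∪ (K \ M'))).card : ZMod 2))
              * (ssgn M' (K \ M') * ssgn (J \ M') M' * ssgn J (Finset.univ \ J)
                  * ssgn (J \ M') (K \ M') * ssgn L ((J \ M') ∪ (K \ M'))
                  * ssgn (L ∪ (J \ M') ∪ (K \ M'))
                      (Finset.univ \ (L ∪ (J \ M') ∪ (K \ M')))) : ℤ) : 𝕜)
            * dchoose 𝕜 k j * dchoose 𝕜 (k - (j : ℤ)) ((J \ M').card)) •
          (sg ((pa + (N : ZMod 2) + (J.card : ZMod 2)) *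
                ((Finset.univ \ (L ∪ (J \ M') ∪ (K \ M'))).card : ZMod 2)) •
              amode a (k - (j : ℤ) - ((J \ M').card : ℤ)) J
                (amode b (l + (j : ℤ)) (L ∪ (J \ M') ∪ (K \ M')) w)
            - sg ((k : ZMod 2) + pa * pb
                  + (pb + (N : ZMod 2) + (J.card : ZMod 2)) *
                    ((Finset.univ \ (L ∪ (J \ M') ∪ (K \ M'))).card : ZMod 2)) •
              amode b (l + k - (j : ℤ) - ((J \ M').card : ℤ))
                (L ∪ (J \ M') ∪ (K \ M')) (amode a (j : ℤ) J w))

end Structures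
section Defs

variable {𝕜 : Type} [Field 𝕜] [CharZero 𝕜] {N : ℕ}
variable {V : Type} [AddCommGroup V] [Module 𝕜 V]

/-- Commutativity of a SUSY vertex algebra: all superfields supercommute, i.e.
`[Y(a,Z), Y(b,W)] = 0` for `a`, `b` of pure parity. -/
def NWSusyVA.IsCommutative (W : NWSusyVA 𝕜 N V) : Prop :=
  ∀ (pa pb : ZMod 2) (a b : V), a ∈ W.gr pa → b ∈ W.gr pb →
    ∀ (j m : ℤ) (J M : Finset (Fin N)),
      W.mode a j J * W.mode b m M
        = sg ((pa + (N : ZMod 2) + (J.card : ZMod 2)) *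
              (pb + (N : ZMod 2) + (M.card : ZMod 2))) •
            (W.mode b m M * W.mode a j J)

/-- Commutativity of an `N_K = N` SUSY vertex algebra. -/
def NKSusyVA.IsCommutative (W : NKSusyVA 𝕜 N V) : Prop :=
  ∀ (pa pb : ZMod 2) (a b : V), a ∈ W.gr pa → b ∈ W.gr pb →
    ∀ (j m : ℤ) (J M : Finset (Fin N)),
      W.mode a j J * W.mode b m M
        = sg ((pa + (N : ZMod 2) + (J.card : ZMod 2)) *
              (pb + (N : ZMod 2) + (M.card : ZMod 2))) •
            (W.mode b m M * W.mode a j J)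

/-- The normally ordered product `a ⋅ b := a_(-1|[N]) b`. -/
def NWSusyVA.prod (W : NWSusyVA 𝕜 N V) (a b : V) : V := W.mode a (-1) Finset.univ b

/-- The normally ordered product `a ⋅ b := a_(-1|[N]) b`. -/
def NKSusyVA.prod (W : NKSusyVA 𝕜 N V) (a b : V) : V := W.mode a (-1) Finset.univ b

/-- The Li filtration of an `N_W = N` SUSY vertex algebra:
`E n` is spanned by the elements `a¹_(-1-k₁|K₁) ⋯ a^r_(-1-k_r|K_r) b`
with `r ≥ 1` and `k₁ + ⋯ + k_r ≥ n`. -/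
def NWSusyVA.liFil (W : NWSusyVA 𝕜 N V) (n : ℤ) : Submodule 𝕜 V :=
  Submodule.span 𝕜 {x : V | ∃ (r : ℕ) (a : Fin (r + 1) → V) (k : Fin (r + 1) → ℕ)
      (K : Fin (r + 1) → Finset (Fin N)) (b : V),
      n ≤ ∑ i, (k i : ℤ) ∧
      x = ((List.ofFn fun i => W.mode (a i) (-1 - (k i : ℤ)) (K i)).prod) b}

/-- The Li filtration of an `N_K = N` SUSY vertex algebra. -/
def NKSusyVA.liFil (W : NKSusyVA 𝕜 N V) (n : ℤ) : Submodule 𝕜 V :=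
  Submodule.span 𝕜 {x : V | ∃ (r : ℕ) (a : Fin (r + 1) → V) (k : Fin (r + 1) → ℕ)
      (K : Fin (r + 1) → Finset (Fin N)) (b : V),
      n ≤ ∑ i, (k i : ℤ) ∧
      x = ((List.ofFn fun i => W.mode (a i) (-1 - (k i : ℤ)) (K i)).prod) b}

/-- The subspace `C₂(V) = span{ a_(-j|J) b : j ≥ 2 }`. -/
def NWSusyVA.C2sub (W : NWSusyVA 𝕜 N V) : Submodule 𝕜 V :=
  Submodule.span 𝕜 {x : V | ∃ (a b : V) (j : ℕ) (J : Finset (Fin N)),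
    2 ≤ j ∧ x = W.mode a (-(j : ℤ)) J b}

/-- The subspace `C₂(V) = span{ a_(-j|J) b : j ≥ 2 }`. -/
def NKSusyVA.C2sub (W : NKSusyVA 𝕜 N V) : Submodule 𝕜 V :=
  Submodule.span 𝕜 {x : V | ∃ (a b : V) (j : ℕ) (J : Finset (Fin N)),
    2 ≤ j ∧ x = W.mode a (-(j : ℤ)) J b}

/-- The set of states generated from a set `G` of strong generators. -/
def NWSusyVA.genSet (W : NWSusyVA 𝕜 N V) (G : Finset V) : Set V :=
  {x : V | ∃ (r : ℕ) (a : Fin r → V) (p : Fin r → ℕ) (P : Fin r → Finset (Fin N)),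
    (∀ i, a i ∈ G ∧ 1 ≤ p i) ∧
    x = ((List.ofFn fun i => W.mode (a i) (-(p i : ℤ)) (P i)).prod) W.vac}

/-- The set of states generated from a set `G` of strong generators. -/
def NKSusyVA.genSet (W : NKSusyVA 𝕜 N V) (G : Finset V) : Set V :=
  {x : V | ∃ (r : ℕ) (a : Fin r → V) (p : Fin r → ℕ) (P : Fin r → Finset (Fin N)),
    (∀ i, a i ∈ G ∧ 1 ≤ p i) ∧
    x = ((List.ofFn fun i => W.mode (a i) (-(p i : ℤ)) (P i)).prod) W.vac}

/-- Monomials in a set `G` of generators, with respect to the product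
`a ⋅ m = a_(-1|[N]) m` (lifting products of the classes `ā` in `R_V = V/C₂(V)`). -/
inductive NWMon (W : NWSusyVA 𝕜 N V) (G : Finset V) : V → Prop
  | vac : NWMon W G W.vac
  | step (g : V) (hg : g ∈ G) (m : V) (hm : NWMon W G m) :
      NWMon W G (W.mode g (-1) Finset.univ m)

/-- Monomials in a set `G` of generators, with respect to the product
`a ⋅ m = a_(-1|[N]) m`. -/
inductive NKMon (W : NKSusyVA 𝕜 N V) (G : Finset V) : V → Prop
  | vac : NKMon W G W.vac
  | step (g : V) (hg : g ∈ G) (m : V) (hm : NKMon W G m) :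
      NKMon W G (W.mode g (-1) Finset.univ m)

end Defs
section ModDefs

variable {𝕜 : Type} [Field 𝕜] [CharZero 𝕜] {N : ℕ}
variable {V : Type} [AddCommGroup V] [Module 𝕜 V]
variable {M : Type} [AddCommGroup M] [Module 𝕜 M]

/-- The Li filtration of a module over an `N_W = N` SUSY vertex algebra. -/
def NWModule.liFil {W : NWSusyVA 𝕜 N V} (Ms : NWModule 𝕜 N V M W) (n : ℤ) :
    Submodule 𝕜 M :=
  Submodule.span 𝕜 {x : M | ∃ (r : ℕ) (a : Fin (r + 1) → V) (k : Fin (r + 1) → ℕ)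
      (K : Fin (r + 1) → Finset (Fin N)) (m : M),
      n ≤ ∑ i, (k i : ℤ) ∧
      x = ((List.ofFn fun i => Ms.amode (a i) (-1 - (k i : ℤ)) (K i)).prod) m}

/-- The Li filtration of a module over an `N_K = N` SUSY vertex algebra. -/
def NKModule.liFil {W : NKSusyVA 𝕜 N V} (Ms : NKModule 𝕜 N V M W) (n : ℤ) :
    Submodule 𝕜 M :=
  Submodule.span 𝕜 {x : M | ∃ (r : ℕ) (a : Fin (r + 1) → V) (k : Fin (r + 1) → ℕ)
      (K : Fin (r + 1) → Finset (Fin N)) (m : M),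
      n ≤ ∑ i, (k i : ℤ) ∧
      x = ((List.ofFn fun i => Ms.amode (a i) (-1 - (k i : ℤ)) (K i)).prod) m}

/-- `C₂(M) = span{ a_(-j|J) m : j ≥ 2 }`. -/
def NWModule.C2M {W : NWSusyVA 𝕜 N V} (Ms : NWModule 𝕜 N V M W) : Submodule 𝕜 M :=
  Submodule.span 𝕜 {x : M | ∃ (a : V) (j : ℕ) (J : Finset (Fin N)) (m : M),
    2 ≤ j ∧ x = Ms.amode a (-(j : ℤ)) J m}

/-- `C₂(M) = span{ a_(-j|J) m : j ≥ 2 }`. -/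
def NKModule.C2M {W : NKSusyVA 𝕜 N V} (Ms : NKModule 𝕜 N V M W) : Submodule 𝕜 M :=
  Submodule.span 𝕜 {x : M | ∃ (a : V) (j : ℕ) (J : Finset (Fin N)) (m : M),
    2 ≤ j ∧ x = Ms.amode a (-(j : ℤ)) J m}

end ModDefs
section Structures2
variable (𝕜 : Type) [Field 𝕜] [CharZero 𝕜] (N : ℕ)
variable (V : Type) [AddCommGroup V] [Module 𝕜 V]
/-- An `N_W = N` SUSY vertex Lie algebra: the data of the nonnegative Fourier modes
`a_(j|J)` (`j ≥ 0`) of a "singular part" state-superfield correspondence `Y₋`,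
satisfying translation invariance, skew-symmetry (in the expanded mode form
involving `e^{Z∇}` with `Z∇ = zT + ∑ ζ^i S^i`) and the supercommutator axiom
(in the equivalent mode form of the SUSY commutator formula). -/
structure NWSusyVLA : Type where
  gr : ZMod 2 → Submodule 𝕜 V
  decomp : DirectSum.Decomposition gr
  T : Module.End 𝕜 V
  S : Fin N → Module.End 𝕜 V
  lmode : V →ₗ[𝕜] ℕ → Finset (Fin N) → Module.End 𝕜 V
  lmode_trunc : ∀ (a v : V), ∃ n : ℕ, ∀ j : ℕ, n ≤ j → ∀ J, lmode a j J v = 0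
  T_even : ∀ (p : ZMod 2), ∀ x ∈ gr p, T x ∈ gr p
  S_odd : ∀ (i : Fin N) (p : ZMod 2), ∀ x ∈ gr p, S i x ∈ gr (p + 1)
  lmode_parity : ∀ (pa pv : ZMod 2) (a v : V) (j : ℕ) (J : Finset (Fin N)),
    a ∈ gr pa → v ∈ gr pv →
    lmode a j J v ∈ gr (pa + pv + (N : ZMod 2) + (J.card : ZMod 2))
  transl_T : ∀ (a : V) (j : ℕ) (J : Finset (Fin N)),
    lmode (T a) j J = (-(j : ℤ)) • lmode a (j - 1) J
  transl_S : ∀ (i : Fin N) (a : V) (j : ℕ) (J : Finset (Fin N)),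
    lmode (S i a) j J = ssgn {i} (Finset.univ \ J) • lmode a j (J.erase i)
  skew : ∀ (pa pb : ZMod 2) (a b : V), a ∈ gr pa → b ∈ gr pb →
    ∀ (j : ℕ) (J : Finset (Fin N)),
    lmode a j J b
      = ((sg (pa * pb) : ℤ) : 𝕜) •
          ∑ᶠ l : ℕ, ∑ L ∈ (Finset.univ \ J).powerset,
            (((sg (((L.card.choose 2 : ℕ) : ZMod 2) + 1 + (j : ZMod 2) + (l : ZMod 2)
                   + (N : ZMod 2) + ((J ∪ L).card : ZMod 2)
                   + (L.card : ZMod 2) * ((N : ZMod 2) + ((J ∪ L).card : ZMod 2)))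
                * ssgn L ((Finset.univ \ J) \ L) : ℤ) : 𝕜)
              * (l.factorial : 𝕜)⁻¹) •
            ((T ^ l * sProd S L) (lmode b (j + l) (J ∪ L) a))
  commutator : ∀ (pa pb : ZMod 2) (a b : V), a ∈ gr pa → b ∈ gr pb →
    ∀ (l m : ℕ) (L M' : Finset (Fin N)) (v : V),
    lmode a l L (lmode b m M' v)
        - sg ((pa + (N : ZMod 2) + (L.card : ZMod 2)) *
              (pb + (N : ZMod 2) + (M'.card : ZMod 2))) •
            lmode b m M' (lmode a l L v)
      = ∑ j ∈ Finset.range (l + 1), ∑ J : Finset (Fin N),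
          if L ∩ M' ⊆ J then
            (((sg ((pa + (N : ZMod 2) + (L.card : ZMod 2)) *
                     ((N : ZMod 2) + (M'.card : ZMod 2))
                   + ((L.card : ZMod 2) + (J.card : ZMod 2)) *
                     ((N : ZMod 2) + (J.card : ZMod 2)))
                * (ssgn J (Finset.univ \ J) * ssgn L (Finset.univ \ L) * ssgn J (L \ J)
                    * ssgn (L \ J) ((Finset.univ \ M') \ (L \ J))) : ℤ) : 𝕜)
              * (l.choose j : 𝕜)) •
            lmode (lmode a j J b) (l + m - j) (M' ∪ (L \ J)) v
          else 0

/-- An `N_K = N` SUSY vertex Lie algebra. -/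
structure NKSusyVLA : Type where
  gr : ZMod 2 → Submodule 𝕜 V
  decomp : DirectSum.Decomposition gr
  SK : Fin N → Module.End 𝕜 V
  T : Module.End 𝕜 V
  T_sq : ∀ i : Fin N, SK i * SK i = T
  lmode : V →ₗ[𝕜] ℕ → Finset (Fin N) → Module.End 𝕜 V
  lmode_trunc : ∀ (a v : V), ∃ n : ℕ, ∀ j : ℕ, n ≤ j → ∀ J, lmode a j J v = 0
  SK_odd : ∀ (i : Fin N) (p : ZMod 2), ∀ x ∈ gr p, SK i x ∈ gr (p + 1)
  lmode_parity : ∀ (pa pv : ZMod 2) (a v : V) (j : ℕ) (J : Finset (Fin N)),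
    a ∈ gr pa → v ∈ gr pv →
    lmode a j J v ∈ gr (pa + pv + (N : ZMod 2) + (J.card : ZMod 2))
  transl_SK : ∀ (i : Fin N) (a : V) (j : ℕ) (J : Finset (Fin N)),
    lmode (SK i a) j J
      = if i ∈ J then ssgn (Finset.univ \ J) {i} • lmode a j (J.erase i)
        else (-(j : ℤ) * ssgn (Finset.univ \ insert i J) {i}) • lmode a (j - 1) (insert i J)
  skew : ∀ (pa pb : ZMod 2) (a b : V), a ∈ gr pa → b ∈ gr pb →
    ∀ (j : ℕ) (J : Finset (Fin N)),
    lmode a j J b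
      = ((sg (pa * pb) : ℤ) : 𝕜) •
          ∑ᶠ l : ℕ, ∑ L ∈ (Finset.univ \ J).powerset,
            (((sg (((L.card.choose 2 : ℕ) : ZMod 2) + 1 + (j : ZMod 2) + (l : ZMod 2)
                   + (N : ZMod 2) + ((J ∪ L).card : ZMod 2)
                   + (L.card : ZMod 2) * ((N : ZMod 2) + ((J ∪ L).card : ZMod 2)))
                * ssgn L ((Finset.univ \ J) \ L) : ℤ) : 𝕜)
              * (l.factorial : 𝕜)⁻¹) •
            ((T ^ l * sProd SK L) (lmode b (j + l) (J ∪ L) a))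
  commutator : ∀ (pa pb : ZMod 2) (a b : V), a ∈ gr pa → b ∈ gr pb →
    ∀ (l m : ℕ) (L M' : Finset (Fin N)) (v : V),
    lmode a l L (lmode b m M' v)
        - sg ((pa + (N : ZMod 2) + (L.card : ZMod 2)) *
              (pb + (N : ZMod 2) + (M'.card : ZMod 2))) •
            lmode b m M' (lmode a l L v)
      = ∑ j ∈ Finset.range (l + 1), ∑ J : Finset (Fin N),
          if M' ∩ ((J \ L) ∪ (L \ J)) = ∅ then
            (((sg ((pa + (N : ZMod 2) + (L.card : ZMod 2)) *
                     ((N : ZMod 2) + (M'.card : ZMod 2))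
                   + (J.card : ZMod 2) * ((N : ZMod 2) + (L.card : ZMod 2))
                   + (L.card : ZMod 2) * (N : ZMod 2)
                   + (((J ∩ L).card.choose 2 : ℕ) : ZMod 2)
                   + (((J.card + 1).choose 2 : ℕ) : ZMod 2))
                * (ssgn ((J \ L) ∪ (L \ J))
                      (Finset.univ \ (M' ∪ (J \ L) ∪ (L \ J)))
                    * ssgn J (Finset.univ \ J) * ssgn L (Finset.univ \ L)
                    * ssgn (J \ L) (J ∩ L) * ssgn (J ∩ L) (L \ J)
                    * ssgn (J \ L) (L \ J)) : ℤ) : 𝕜)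
              * ((∏ i ∈ Finset.range (j + (J \ L).card), ((l : 𝕜) - (i : 𝕜)))
                  / (j.factorial : 𝕜))) •
            lmode (lmode a j J b) (l + m - j - (J \ L).card) (M' ∪ (J \ L) ∪ (L \ J)) v
          else 0

/-- An `N_W = N` SUSY vertex Poisson algebra: a commutative `N_W = N` SUSY vertex
algebra together with an `N_W = N` SUSY vertex Lie algebra structure with the same
grading and operators `T`, `S^i`, such that the vertex Lie modes act as
super-derivations of the commutative product `b ⋅ c = b_(-1|[N]) c`. -/
structure NWSusyVPA : Type where
  toVA : NWSusyVA 𝕜 N V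
  commVA : toVA.IsCommutative
  toVLA : NWSusyVLA 𝕜 N V
  gr_eq : toVLA.gr = toVA.gr
  T_eq : toVLA.T = toVA.T
  S_eq : toVLA.S = toVA.S
  leibniz : ∀ (pa pb : ZMod 2) (a b : V), a ∈ toVA.gr pa → b ∈ toVA.gr pb →
    ∀ (j : ℕ) (J : Finset (Fin N)) (c : V),
      toVLA.lmode a j J (toVA.mode b (-1) Finset.univ c)
        = toVA.mode (toVLA.lmode a j J b) (-1) Finset.univ c
          + sg ((pa + (J.card : ZMod 2)) * pb) •
              toVA.mode b (-1) Finset.univ (toVLA.lmode a j J c)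

/-- An `N_K = N` SUSY vertex Poisson algebra. -/
structure NKSusyVPA : Type where
  toVA : NKSusyVA 𝕜 N V
  commVA : toVA.IsCommutative
  toVLA : NKSusyVLA 𝕜 N V
  gr_eq : toVLA.gr = toVA.gr
  SK_eq : toVLA.SK = toVA.SK
  leibniz : ∀ (pa pb : ZMod 2) (a b : V), a ∈ toVA.gr pa → b ∈ toVA.gr pb →
    ∀ (j : ℕ) (J : Finset (Fin N)) (c : V),
      toVLA.lmode a j J (toVA.mode b (-1) Finset.univ c)
        = toVA.mode (toVLA.lmode a j J b) (-1) Finset.univ c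
          + sg ((pa + (J.card : ZMod 2)) * pb) •
              toVA.mode b (-1) Finset.univ (toVLA.lmode a j J c)
end Structures2


section LiProof

variable {𝕜 : Type} [Field 𝕜] [CharZero 𝕜] {N : ℕ}
variable {V : Type} [AddCommGroup V] [Module 𝕜 V]
variable {M : Type} [AddCommGroup M] [Module 𝕜 M]
variable {W : NKSusyVA 𝕜 N V}

private lemma finsum_mem_sub {ι : Type*} (p : Submodule 𝕜 M) (f : ι → M)
    (h : ∀ i, f i ∈ p) : (∑ᶠ i, f i) ∈ p := by
  by_cases hf : (Function.support f).Finite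
  · rw [finsum_eq_sum f hf]
    exact Submodule.sum_mem _ fun i _ => h i
  · rw [finsum_of_infinite_support hf]
    exact p.zero_mem

/-- Induction on super-parity decomposition. -/
private lemma pureInd (P : V → Prop) (h0 : P 0) (hadd : ∀ x y, P x → P y → P (x + y))
    (hp : ∀ (p : ZMod 2) (x : V), x ∈ W.gr p → P x) (a : V) : P a := by
  haveI := W.decomp
  classical
  rw [← DirectSum.sum_support_decompose W.gr a]
  exact Finset.sum_induction _ _ hadd h0 (fun i _ => hp i _ (DirectSum.decompose W.gr a i).2)

private lemma pureInd2 (P : V → V → Prop)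
    (hl0 : ∀ b, P 0 b) (hladd : ∀ x y b, P x b → P y b → P (x + y) b)
    (hr0 : ∀ a, P a 0) (hradd : ∀ a x y, P a x → P a y → P a (x + y))
    (hp : ∀ pa pb a b, a ∈ W.gr pa → b ∈ W.gr pb → P a b) (a b : V) : P a b :=
  pureInd (P := fun a' => P a' b) (hl0 b) (fun x y hx hy => hladd x y b hx hy)
    (fun pa x hx => pureInd (P := fun b' => P x b') (hr0 x) (hradd x)
      (fun pb y hy => hp pa pb x y hx hy) b) a

variable (Ms : NKModule 𝕜 N V M W)

private lemma liFil_anti {n n' : ℤ} (h : n ≤ n') : Ms.liFil n' ≤ Ms.liFil n := by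
  apply Submodule.span_mono
  rintro x ⟨r, a, k, K, m, hs, hx⟩
  exact ⟨r, a, k, K, m, le_trans h hs, hx⟩

private lemma mem_of_le {x : M} {n n' : ℤ} (h : x ∈ Ms.liFil n') (hle : n ≤ n') :
    x ∈ Ms.liFil n := liFil_anti Ms hle h

private lemma prod_head {A : Type*} [AddCommGroup A] [Module 𝕜 A] {r : ℕ}
    (f : Fin (r + 1) → Module.End 𝕜 A) (b : A) :
    (List.ofFn f).prod b = f 0 ((List.ofFn fun i : Fin r => f i.succ).prod b) := by
  rw [List.ofFn_succ, List.prod_cons, Module.End.mul_apply]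

private lemma prod_mem_liFil (r : ℕ) (aa : Fin (r + 1) → V) (kk : Fin (r + 1) → ℕ)
    (KK : Fin (r + 1) → Finset (Fin N)) (b : M) :
    ((List.ofFn fun i => Ms.amode (aa i) (-1 - (kk i : ℤ)) (KK i)).prod) b
      ∈ Ms.liFil (∑ i, (kk i : ℤ)) :=
  Submodule.subset_span ⟨r, aa, kk, KK, b, le_rfl, rfl⟩

private lemma liFil_top {n : ℤ} (h : n ≤ 0) (x : M) : x ∈ Ms.liFil n := by
  apply mem_of_le Ms (n' := 0) _ h
  have := prod_mem_liFil Ms 0 (fun _ => W.vac) (fun _ => 0) (fun _ => Finset.univ) x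
  have e : ((List.ofFn fun i : Fin 1 =>
        Ms.amode W.vac (-1 - ((0 : ℕ) : ℤ)) Finset.univ).prod) x = x := by
    rw [prod_head, show (-1 - ((0:ℕ):ℤ)) = -1 by norm_num, Ms.vac_act]
    simp
  rw [e] at this
  simpa using this

/-- Claim A : prepending a negative mode raises the filtration degree. -/
private lemma prepend (a : V) (k : ℕ) (K : Finset (Fin N)) {n : ℤ} {x : M}
    (hx : x ∈ Ms.liFil n) : Ms.amode a (-1 - (k : ℤ)) K x ∈ Ms.liFil (n + k) := by
  induction hx using Submodule.span_induction with
  | mem x hxg =>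
    obtain ⟨r, aa, kk, KK, m, hs, rfl⟩ := hxg
    apply Submodule.subset_span
    refine ⟨r + 1, Fin.cons a aa, Fin.cons k kk, Fin.cons K KK, m, ?_, ?_⟩
    · rw [Fin.sum_univ_succ]
      simp only [Fin.cons_zero, Fin.cons_succ]
      push_cast
      linarith
    · conv_rhs => rw [prod_head]
      simp only [Fin.cons_zero, Fin.cons_succ]
  | zero => simpa using Submodule.zero_mem _
  | add x y hx hy ihx ihy => simpa using Submodule.add_mem _ ihx ihy
  | smul c x hx ihx => simpa using Submodule.smul_mem _ c ihx

/-- `RefProp v s` : every nonnegative mode drops the filtration degree of `v` exactly. -/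
private def RefProp (v : M) (s : ℤ) : Prop :=
  ∀ (a : V) (l : ℤ), 0 ≤ l → ∀ L : Finset (Fin N),
    Ms.amode a l L v ∈ Ms.liFil (s - l)

private lemma refProp_step (v : M) (s : ℤ) (hv : RefProp Ms v s) (hv' : v ∈ Ms.liFil s)
    (b : V) (k : ℕ) (K : Finset (Fin N)) :
    RefProp Ms (Ms.amode b (-1 - (k : ℤ)) K v) (s + k) := by
  intro a l hl L
  refine pureInd2 (W := W)
    (P := fun a' b' => Ms.amode a' l L (Ms.amode b' (-1 - (k : ℤ)) K v)
      ∈ Ms.liFil (s + (k : ℤ) - l)) ?_ ?_ ?_ ?_ ?_ a b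
  · intro b'
    simp only [map_zero, Pi.zero_apply, LinearMap.zero_apply]
    exact Submodule.zero_mem _
  · intro x y b' hx hy
    simp only [map_add, Pi.add_apply, LinearMap.add_apply]
    exact Submodule.add_mem _ hx hy
  · intro a'
    simp only [map_zero, Pi.zero_apply, LinearMap.zero_apply, map_zero]
    exact Submodule.zero_mem _
  · intro a' x y hx hy
    simp only [map_add, Pi.add_apply, LinearMap.add_apply]
    exact Submodule.add_mem _ hx hy
  · intro pa pb a' b' ha hb
    have h := Ms.comm_formula pa pb a' b' ha hb l (-1 - (k : ℤ)) L K v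
    rw [eq_add_of_sub_eq h]
    apply Submodule.add_mem
    · apply finsum_mem_sub
      intro j
      apply Submodule.sum_mem
      intro J _
      split_ifs with hcond
      · apply Submodule.smul_mem
        rcases le_or_gt 0 (l + (-1 - (k : ℤ)) - (j : ℤ) - ((J \ L).card : ℤ)) with hpos | hneg
        · exact mem_of_le Ms (hv _ _ hpos _) (by omega)
        · rw [show l + (-1 - (k : ℤ)) - (j : ℤ) - ((J \ L).card : ℤ)
              = -1 - (((-1 - (l + (-1 - (k : ℤ)) - (j : ℤ) - ((J \ L).card : ℤ))).toNat : ℕ) : ℤ)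
            by omega]
          exact mem_of_le Ms (prepend Ms _ _ _ hv') (by omega)
      · exact Submodule.zero_mem _
    · exact zsmul_mem (mem_of_le Ms (prepend Ms b' k K (hv a' l hl L)) (by omega)) _

private lemma refProp_anti {v : M} {s s' : ℤ} (h : RefProp Ms v s') (hle : s ≤ s') :
    RefProp Ms v s := fun a l hl L => mem_of_le Ms (h a l hl L) (by omega)

private lemma refProp_prod : ∀ (r : ℕ) (aa : Fin (r + 1) → V) (kk : Fin (r + 1) → ℕ)
    (KK : Fin (r + 1) → Finset (Fin N)) (b : M),
    RefProp Ms (((List.ofFn fun i => Ms.amode (aa i) (-1 - (kk i : ℤ)) (KK i)).prod) b)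
      (∑ i, (kk i : ℤ)) := by
  intro r
  induction r with
  | zero =>
    intro aa kk KK b
    have h0 : RefProp Ms b 0 := fun a l hl L => liFil_top Ms (by omega) _
    have hstep := refProp_step Ms b 0 h0 (liFil_top Ms le_rfl b) (aa 0) (kk 0) (KK 0)
    have e1 : ((List.ofFn fun i : Fin 1 =>
          Ms.amode (aa i) (-1 - (kk i : ℤ)) (KK i)).prod) b
        = Ms.amode (aa 0) (-1 - (kk 0 : ℤ)) (KK 0) b := by
      rw [prod_head]; simp
    have e2 : (∑ i : Fin 1, (kk i : ℤ)) = 0 + (kk 0 : ℤ) := by simp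
    rw [e1, e2]
    exact hstep
  | succ n ih =>
    intro aa kk KK b
    have hv := ih (fun i => aa i.succ) (fun i => kk i.succ) (fun i => KK i.succ) b
    have hv' := prod_mem_liFil Ms n (fun i => aa i.succ) (fun i => kk i.succ)
      (fun i => KK i.succ) b
    have hstep := refProp_step Ms _ _ hv hv' (aa 0) (kk 0) (KK 0)
    have e2 : (∑ i : Fin (n + 2), (kk i : ℤ))
        = (∑ i : Fin (n + 1), ((kk i.succ : ℕ) : ℤ)) + (kk 0 : ℤ) := by
      rw [Fin.sum_univ_succ]; ring
    rw [prod_head, e2]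
    exact hstep

private lemma base_refined (s : ℤ) (m : M) (hm : m ∈ Ms.liFil s) : RefProp Ms m s := by
  induction hm using Submodule.span_induction with
  | mem x hxg =>
    obtain ⟨r, aa, kk, KK, b, hs, rfl⟩ := hxg
    exact refProp_anti Ms (refProp_prod Ms r aa kk KK b) hs
  | zero =>
    intro a l hl L
    simp only [map_zero]
    exact Submodule.zero_mem _
  | add x y hx hy ihx ihy =>
    intro a l hl L
    simp only [map_add]
    exact Submodule.add_mem _ (ihx a l hl L) (ihy a l hl L)
  | smul c x hx ihx =>
    intro a l hl L
    simp only [map_smul]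
    exact Submodule.smul_mem _ c (ihx a l hl L)

private lemma base_coarse (s : ℤ) (m : M) (hm : m ∈ Ms.liFil s) (a : V) (l : ℤ)
    (L : Finset (Fin N)) : Ms.amode a l L m ∈ Ms.liFil (s - l - 1) := by
  rcases le_or_gt 0 l with hl | hl
  · exact mem_of_le Ms (base_refined Ms s m hm a l hl L) (by omega)
  · rw [show l = -1 - (((-1 - l).toNat : ℕ) : ℤ) by omega]
    exact mem_of_le Ms (prepend Ms a ((-1 - l).toNat) L hm) (by omega)

/-- `CoProp u ρ` : the main statement for a fixed state `u` of filtration degree `ρ`. -/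
private def CoProp (u : V) (ρ : ℤ) : Prop :=
  ∀ (s : ℤ) (m : M), m ∈ Ms.liFil s → ∀ (l : ℤ) (L : Finset (Fin N)),
    (Ms.amode u l L m ∈ Ms.liFil (ρ + s - l - 1)) ∧
    (0 ≤ l → Ms.amode u l L m ∈ Ms.liFil (ρ + s - l))

private lemma coProp_base (u : V) : CoProp Ms u 0 := by
  intro s m hm l L
  constructor
  · exact mem_of_le Ms (base_coarse Ms s m hm u l L) (by omega)
  · intro hl
    exact mem_of_le Ms (base_refined Ms s m hm u l hl L) (by omega)

private lemma coProp_anti {u : V} {ρ ρ' : ℤ} (h : CoProp Ms u ρ') (hle : ρ ≤ ρ') :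
    CoProp Ms u ρ := by
  intro s m hm l L
  obtain ⟨h1, h2⟩ := h s m hm l L
  exact ⟨mem_of_le Ms h1 (by omega), fun hl => mem_of_le Ms (h2 hl) (by omega)⟩

private lemma coProp_pure_step {ρ : ℤ} (k : ℕ) (K : Finset (Fin N))
    (pa pb : ZMod 2) (a' v' : V) (ha : a' ∈ W.gr pa) (hb : v' ∈ W.gr pb)
    (hv : CoProp Ms v' ρ) : CoProp Ms (W.mode a' (-1 - (k : ℤ)) K v') (ρ + k) := by
  intro s m hm l L
  have h := Ms.iterate_formula pa pb a' v' ha hb (-1 - (k : ℤ)) l K L m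
  constructor
  · rw [h]
    apply finsum_mem_sub
    intro j
    apply Submodule.sum_mem
    intro J _
    apply Submodule.sum_mem
    intro M' _
    apply Submodule.smul_mem
    apply Submodule.sub_mem
    · refine zsmul_mem ?_ _
      have h1 := (hv s m hm (l + (j : ℤ)) (L ∪ (J \ M') ∪ (K \ M'))).1
      rw [show (-1 - (k : ℤ)) - (j : ℤ) - ((J \ M').card : ℤ)
          = -1 - (((k + j + (J \ M').card : ℕ)) : ℤ) by push_cast; ring]
      exact mem_of_le Ms (prepend Ms a' (k + j + (J \ M').card) J h1)
        (by push_cast; omega)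
    · refine zsmul_mem ?_ _
      have hin : Ms.amode a' ((j : ℕ) : ℤ) J m ∈ Ms.liFil (s - (j : ℤ)) :=
        base_refined Ms s m hm a' (j : ℤ) (Int.natCast_nonneg j) J
      have h2 := (hv (s - (j : ℤ)) _ hin
        (l + (-1 - (k : ℤ)) - (j : ℤ) - ((J \ M').card : ℤ))
        (L ∪ (J \ M') ∪ (K \ M'))).1
      exact mem_of_le Ms h2 (by push_cast; omega)
  · intro hl
    rw [h]
    apply finsum_mem_sub
    intro j
    apply Submodule.sum_mem
    intro J _
    apply Submodule.sum_mem
    intro M' _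
    apply Submodule.smul_mem
    apply Submodule.sub_mem
    · refine zsmul_mem ?_ _
      have h1 := (hv s m hm (l + (j : ℤ)) (L ∪ (J \ M') ∪ (K \ M'))).2 (by omega)
      rw [show (-1 - (k : ℤ)) - (j : ℤ) - ((J \ M').card : ℤ)
          = -1 - (((k + j + (J \ M').card : ℕ)) : ℤ) by push_cast; ring]
      exact mem_of_le Ms (prepend Ms a' (k + j + (J \ M').card) J h1)
        (by push_cast; omega)
    · refine zsmul_mem ?_ _
      have hin : Ms.amode a' ((j : ℕ) : ℤ) J m ∈ Ms.liFil (s - (j : ℤ)) :=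
        base_refined Ms s m hm a' (j : ℤ) (Int.natCast_nonneg j) J
      have h2 := (hv (s - (j : ℤ)) _ hin
        (l + (-1 - (k : ℤ)) - (j : ℤ) - ((J \ M').card : ℤ))
        (L ∪ (J \ M') ∪ (K \ M'))).1
      exact mem_of_le Ms h2 (by push_cast; omega)

/-- Pure states of known filtration behaviour. -/
private def goodSet (ρ : ℤ) : Set V := {x | (∃ p, x ∈ W.gr p) ∧ CoProp Ms x ρ}

private lemma good_coProp {u : V} {ρ : ℤ}
    (hu : u ∈ AddSubmonoid.closure (goodSet Ms ρ)) : CoProp Ms u ρ := by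
  induction hu using AddSubmonoid.closure_induction with
  | mem y hy => exact hy.2
  | zero =>
    intro s m hm l L
    simp only [map_zero, Pi.zero_apply, LinearMap.zero_apply]
    exact ⟨Submodule.zero_mem _, fun _ => Submodule.zero_mem _⟩
  | add x y _ _ hx hy =>
    intro s m hm l L
    simp only [map_add, Pi.add_apply, LinearMap.add_apply]
    exact ⟨Submodule.add_mem _ (hx s m hm l L).1 (hy s m hm l L).1,
      fun hl => Submodule.add_mem _ ((hx s m hm l L).2 hl) ((hy s m hm l L).2 hl)⟩

private lemma good_base (u : V) : u ∈ AddSubmonoid.closure (goodSet Ms 0) := by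
  refine pureInd (W := W)
    (P := fun u => u ∈ AddSubmonoid.closure (goodSet Ms 0)) ?_ ?_ ?_ u
  · exact AddSubmonoid.zero_mem _
  · exact fun x y hx hy => AddSubmonoid.add_mem _ hx hy
  · exact fun p x hx => AddSubmonoid.subset_closure ⟨⟨p, hx⟩, coProp_base Ms x⟩

private lemma coProp_smul {u : V} {ρ : ℤ} (c : 𝕜) (h : CoProp Ms u ρ) :
    CoProp Ms (c • u) ρ := by
  intro s m hm l L
  simp only [map_smul, Pi.smul_apply, LinearMap.smul_apply]
  exact ⟨Submodule.smul_mem _ c (h s m hm l L).1,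
    fun hl => Submodule.smul_mem _ c ((h s m hm l L).2 hl)⟩

private lemma good_smul {u : V} {ρ : ℤ} (c : 𝕜)
    (h : u ∈ AddSubmonoid.closure (goodSet Ms ρ)) :
    c • u ∈ AddSubmonoid.closure (goodSet Ms ρ) := by
  induction h using AddSubmonoid.closure_induction with
  | mem y hy =>
    exact AddSubmonoid.subset_closure
      ⟨⟨hy.1.choose, Submodule.smul_mem _ c hy.1.choose_spec⟩, coProp_smul Ms c hy.2⟩
  | zero => rw [smul_zero]; exact AddSubmonoid.zero_mem _
  | add x y _ _ hx hy => rw [smul_add]; exact AddSubmonoid.add_mem _ hx hy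

private lemma good_anti {u : V} {ρ ρ' : ℤ}
    (h : u ∈ AddSubmonoid.closure (goodSet Ms ρ')) (hle : ρ ≤ ρ') :
    u ∈ AddSubmonoid.closure (goodSet Ms ρ) := by
  induction h using AddSubmonoid.closure_induction with
  | mem y hy => exact AddSubmonoid.subset_closure ⟨hy.1, coProp_anti Ms hy.2 hle⟩
  | zero => exact AddSubmonoid.zero_mem _
  | add x y _ _ hx hy => exact AddSubmonoid.add_mem _ hx hy

private lemma good_step {ρ : ℤ} (a : V) (k : ℕ) (K : Finset (Fin N)) {v : V}
    (hv : v ∈ AddSubmonoid.closure (goodSet Ms ρ)) :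
    W.mode a (-1 - (k : ℤ)) K v ∈ AddSubmonoid.closure (goodSet Ms (ρ + k)) := by
  induction hv using AddSubmonoid.closure_induction with
  | zero =>
    simp only [map_zero]
    exact AddSubmonoid.zero_mem _
  | add x y _ _ hx hy =>
    rw [map_add]
    exact AddSubmonoid.add_mem _ hx hy
  | mem v' hv' =>
    obtain ⟨⟨pb, hpb⟩, hco⟩ := hv'
    refine pureInd (W := W)
      (P := fun a => W.mode a (-1 - (k : ℤ)) K v'
        ∈ AddSubmonoid.closure (goodSet Ms (ρ + k))) ?_ ?_ ?_ a
    · simp only [map_zero, Pi.zero_apply, LinearMap.zero_apply]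
      exact AddSubmonoid.zero_mem _
    · intro x y hx hy
      simp only [map_add, Pi.add_apply, LinearMap.add_apply]
      exact AddSubmonoid.add_mem _ hx hy
    · intro pa x hx
      exact AddSubmonoid.subset_closure
        ⟨⟨_, W.mode_parity pa pb x v' (-1 - (k : ℤ)) K hx hpb⟩,
         coProp_pure_step Ms k K pa pb x v' hx hpb hco⟩

private lemma good_prod : ∀ (r : ℕ) (aa : Fin (r + 1) → V) (kk : Fin (r + 1) → ℕ)
    (KK : Fin (r + 1) → Finset (Fin N)) (b : V),
    ((List.ofFn fun i => W.mode (aa i) (-1 - (kk i : ℤ)) (KK i)).prod) b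
      ∈ AddSubmonoid.closure (goodSet Ms (∑ i, (kk i : ℤ))) := by
  intro r
  induction r with
  | zero =>
    intro aa kk KK b
    have hstep := good_step Ms (aa 0) (kk 0) (KK 0) (good_base Ms b)
    have e1 : ((List.ofFn fun i : Fin 1 =>
          W.mode (aa i) (-1 - (kk i : ℤ)) (KK i)).prod) b
        = W.mode (aa 0) (-1 - (kk 0 : ℤ)) (KK 0) b := by
      rw [prod_head]; simp
    have e2 : (∑ i : Fin 1, (kk i : ℤ)) = 0 + (kk 0 : ℤ) := by simp
    rw [e1, e2]
    exact hstep
  | succ n ih =>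
    intro aa kk KK b
    have hv := ih (fun i => aa i.succ) (fun i => kk i.succ) (fun i => KK i.succ) b
    have hstep := good_step Ms (aa 0) (kk 0) (KK 0) hv
    have e2 : (∑ i : Fin (n + 2), (kk i : ℤ))
        = (∑ i : Fin (n + 1), ((kk i.succ : ℕ) : ℤ)) + (kk 0 : ℤ) := by
      rw [Fin.sum_univ_succ]; ring
    rw [prod_head, e2]
    exact hstep

private lemma main_coProp (ρ : ℤ) (u : V) (hu : u ∈ W.liFil ρ) : CoProp Ms u ρ := by
  apply good_coProp Ms (ρ := ρ)
  induction hu using Submodule.span_induction with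
  | mem x hxg =>
    obtain ⟨r, aa, kk, KK, b, hs, rfl⟩ := hxg
    exact good_anti Ms (good_prod Ms r aa kk KK b) hs
  | zero => exact AddSubmonoid.zero_mem _
  | add x y hx hy ihx ihy => exact AddSubmonoid.add_mem _ ihx ihy
  | smul c x hx ihx => exact good_smul Ms c ihx

end LiProof

/-- **Modes of filtered states shift the Li filtration of a module, `N_K = N` case:**
for `u ∈ E r (V)` and `m ∈ E s (M)`, `u_(l|L) m ∈ E (r+s-l-1) (M)` for all `l ∈ ℤ`,
and moreover `u_(l|L) m ∈ E (r+s-l) (M)` when `l ≥ 0`. -/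
theorem NK_liFil_mode_liFil
    (𝕜 : Type) [Field 𝕜] [CharZero 𝕜] (N : ℕ) (hN : 0 < N)
    (V : Type) [AddCommGroup V] [Module 𝕜 V]
    (M : Type) [AddCommGroup M] [Module 𝕜 M]
    (W : NKSusyVA 𝕜 N V) (Ms : NKModule 𝕜 N V M W) :
    (∀ (r s : ℤ) (u : V) (m : M) (l : ℤ) (L : Finset (Fin N)),
      u ∈ W.liFil r → m ∈ Ms.liFil s →
      Ms.amode u l L m ∈ Ms.liFil (r + s - l - 1)) ∧
    (∀ (r s : ℤ) (u : V) (m : M) (l : ℤ) (L : Finset (Fin N)), 0 ≤ l →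
      u ∈ W.liFil r → m ∈ Ms.liFil s →
      Ms.amode u l L m ∈ Ms.liFil (r + s - l)) := by
  constructor
  · intro r s u m l L hu hm
    exact mem_of_le Ms ((main_coProp Ms r u hu s m hm l L).1) (by omega)
  · intro r s u m l L hl hu hm
    exact mem_of_le Ms ((main_coProp Ms r u hu s m hm l L).2 hl) (by omega)

end SUSY
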